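/- Define ψ(n1, n2, r) := Σ_{u mod r, gcd(u,r)=1} R(u + n1, r) · R(u + n2, r). Then for every prime p and all integers n1, n2, one has ψ(n1, n2, p) = p · R(n1 − n2, p) − R(n1, p) · R(n2, p). -/

import Mathlib

/-- `e(x/q)`-type additive character: for `x : ZMod q`, `eZMod q x = exp(2πi·x/q)`. -/
noncomputable def eZMod (q : ℕ) (x : ZMod q) : ℂ :=
  Complex.exp (2 * Real.pi * Complex.I * (x.val : ℂ) / (q : ℂ))

/-- Kloosterman sum `S(m, n; q) = Σ_{d mod q, gcd(d,q)=1} e((m·d + n·d⁻¹)/q)`. -/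
noncomputable def kloostermanS (q : ℕ) (m n : ZMod q) : ℂ :=
  ∑ d ∈ (Finset.range q).filter (fun d => Nat.gcd d q = 1),
    eZMod q (m * (d : ZMod q) + n * ((d : ZMod q)⁻¹))

/-- Gauss sum `G_χ(n) = Σ_{a mod q} χ(a) e(a·n/q)`. -/
noncomputable def gaussS (q : ℕ) (χ : DirichletCharacter ℂ q) (n : ZMod q) : ℂ :=
  ∑ a ∈ Finset.range q, χ (a : ZMod q) * eZMod q ((a : ZMod q) * n)

/-- Ramanujan sum `R(n, q) = Σ_{a mod q, gcd(a,q)=1} e(a·n/q)`. -/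
noncomputable def ramanujanS (q : ℕ) (n : ZMod q) : ℂ :=
  ∑ a ∈ (Finset.range q).filter (fun a => Nat.gcd a q = 1), eZMod q ((a : ZMod q) * n)

/-- `ψ(n1, n2, r) = Σ_{u mod r, (u,r)=1} R(u + n1, r) R(u + n2, r)`. -/
noncomputable def psiSum (n1 n2 : ℤ) (r : ℕ) : ℂ :=
  ∑ u ∈ (Finset.range r).filter (fun u => Nat.gcd u r = 1),
    ramanujanS r (((u : ℕ) : ZMod r) + (n1 : ZMod r)) *
      ramanujanS r (((u : ℕ) : ZMod r) + (n2 : ZMod r))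

/-!
Expanding both Ramanujan sums and summing over all residues `x` mod `q` first, orthogonality of
additive characters kills every pair of units `(c, d)` except `d = -c`, which gives
`∑ₓ R(x + a, q) R(x + b, q) = q R(a - b, q)` for every modulus `q`. For a prime `p` the coprime
residues are exactly the nonzero ones, so `ψ(n1, n2, p)` is this full sum minus its `x = 0` term.
-/

open Finset

section
variable {q : ℕ} [NeZero q]

lemma eZMod_eq_stdAddChar (x : ZMod q) : eZMod q x = ZMod.stdAddChar x := by
  rw [ZMod.stdAddChar_apply, ZMod.toCircle_apply, eZMod]

lemma eZMod_add (x y : ZMod q) : eZMod q (x + y) = eZMod q x * eZMod q y := by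
  simp only [eZMod_eq_stdAddChar, AddChar.map_add_eq_mul]

lemma sum_eZMod_mul (b : ZMod q) :
    ∑ x : ZMod q, eZMod q (x * b) = if b = 0 then (q : ℂ) else 0 := by
  simp only [eZMod_eq_stdAddChar, AddChar.sum_mulShift b (ZMod.isPrimitive_stdAddChar q),
    ZMod.card]
  split_ifs <;> simp

lemma sum_coprime_eq_sum_isUnit {M : Type*} [AddCommMonoid M] (f : ZMod q → M) :
    ∑ a ∈ (range q).filter (fun a => Nat.gcd a q = 1), f a =
      ∑ x ∈ univ.filter IsUnit, f x := by
  refine sum_nbij' (fun a => (a : ZMod q)) ZMod.val ?_ ?_ ?_ ?_ fun _ _ => rfl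
  · intro a ha
    rw [mem_filter, mem_range] at ha
    simpa [ZMod.isUnit_iff_coprime] using ha.2
  · intro x hx
    rw [mem_filter, ← ZMod.natCast_zmod_val x, ZMod.isUnit_iff_coprime] at hx
    exact mem_filter.mpr ⟨mem_range.mpr x.val_lt, hx.2⟩
  · intro a ha
    exact ZMod.val_cast_of_lt (mem_range.mp (mem_filter.mp ha).1)
  · intro x _
    exact ZMod.natCast_zmod_val x

lemma ramanujanS_eq_sum_isUnit (n : ZMod q) :
    ramanujanS q n = ∑ c ∈ univ.filter IsUnit, eZMod q (c * n) :=
  sum_coprime_eq_sum_isUnit fun c => eZMod q (c * n)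

lemma sum_ramanujanS_mul_ramanujanS (a b : ZMod q) :
    ∑ x : ZMod q, ramanujanS q (x + a) * ramanujanS q (x + b) = q * ramanujanS q (a - b) := by
  have hterm (x c d : ZMod q) :
      eZMod q (c * (x + a)) * eZMod q (d * (x + b)) =
        eZMod q (c * a + d * b) * eZMod q (x * (c + d)) := by
    rw [← eZMod_add, ← eZMod_add]
    ring_nf
  simp only [ramanujanS_eq_sum_isUnit, sum_mul_sum, hterm]
  rw [mul_sum, sum_comm]
  refine sum_congr rfl fun c hc => ?_
  rw [sum_comm]
  simp only [← mul_sum, sum_eZMod_mul, add_eq_zero_iff_eq_neg', mul_ite, mul_zero]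
  rw [sum_ite_eq', if_pos (mem_filter.mpr ⟨mem_univ _, (mem_filter.mp hc).2.neg⟩)]
  ring_nf
end

/-- For every prime `p` and integers `n1, n2`,
`ψ(n1, n2, p) = p·R(n1 − n2, p) − R(n1, p)·R(n2, p)`. -/
theorem stmt11 (p : ℕ) (hp : p.Prime) (n1 n2 : ℤ) :
    psiSum n1 n2 p =
      (p : ℂ) * ramanujanS p ((n1 - n2 : ℤ) : ZMod p) -
        ramanujanS p ((n1 : ℤ) : ZMod p) * ramanujanS p ((n2 : ℤ) : ZMod p) := by
  have : Fact p.Prime := ⟨hp⟩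
  have hunits : univ.filter (IsUnit : ZMod p → Prop) = univ.erase 0 := by
    ext x
    simp [isUnit_iff_ne_zero]
  rw [psiSum,
    sum_coprime_eq_sum_isUnit fun u : ZMod p => ramanujanS p (u + n1) * ramanujanS p (u + n2),
    hunits, sum_erase_eq_sub (mem_univ 0), sum_ramanujanS_mul_ramanujanS]
  push_cast
  simp only [zero_add]
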